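/- arXiv:2402.11369 — 2 statements merged into one kernel-verified Lean document; each statement's English description precedes it below -/
import Mathlib

section
/- Suppose G₂ has trivial center. Then the perturbed direct products G₁ ×_{ε₁} G₂ and G₁ ×_{ε₂} G₂ admit an isomorphism φ with pr₂(φ(1,y)) = y for all y ∈ G₂ (a G₂-isomorphism) if and only if there exists an automorphism σ of G₁ such that (σ∘ε₁)·ε₂⁻¹ is a 2-coboundary, i.e. there exists η : G₂ → G₁ with σ(ε₁(y,y'))·ε₂(y,y')⁻¹ = η(y)·η(y')·η(yy')⁻¹ for all y,y' ∈ G₂. -/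
/-!
Elements `(x, 1)` are central in `G₁ ×_ε G₂`, so a `G₂`-isomorphism `φ` sends them to elements
whose `G₂`-component is central in `G₂`, hence trivial. Thus `φ` preserves `G₂`-components,
restricts to an automorphism `σ` of `G₁`, and comparing `G₁`-components in
`φ((1, y)(1, y')) = φ(ε₁(y, y'), 1) φ(1, yy')` shows that `η y := pr₁ φ(1, y)` makes
`(σ ∘ ε₁) ε₂⁻¹` a coboundary. Conversely `(x, y) ↦ (σ x · η y, y)` is a `G₂`-isomorphism.
-/

structure Cocycle (G₁ G₂ : Type*) [CommGroup G₁] [Group G₂] where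
  f : G₂ → G₂ → G₁
  norm_left : ∀ g, f 1 g = 1
  norm_right : ∀ g, f g 1 = 1
  cocycle : ∀ g h k, f h g * f (h * g) k = f g k * f h (g * k)

variable {G₁ G₂ : Type*} [CommGroup G₁] [Group G₂]

/-- The perturbed direct product `G₁ ×_ε G₂`. -/
@[ext]
structure PP (ε : Cocycle G₁ G₂) where
  x : G₁
  y : G₂

namespace PP

variable {ε : Cocycle G₁ G₂}

instance : Mul (PP ε) := ⟨fun a b => ⟨a.x * b.x * ε.f a.y b.y, a.y * b.y⟩⟩
instance : One (PP ε) := ⟨⟨1, 1⟩⟩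
instance : Inv (PP ε) := ⟨fun a => ⟨a.x⁻¹ * (ε.f a.y a.y⁻¹)⁻¹, a.y⁻¹⟩⟩

@[simp] lemma mul_x (a b : PP ε) : (a * b).x = a.x * b.x * ε.f a.y b.y := rfl
@[simp] lemma mul_y (a b : PP ε) : (a * b).y = a.y * b.y := rfl
@[simp] lemma one_x : (1 : PP ε).x = 1 := rfl
@[simp] lemma one_y : (1 : PP ε).y = 1 := rfl
@[simp] lemma inv_x (a : PP ε) : (a⁻¹).x = a.x⁻¹ * (ε.f a.y a.y⁻¹)⁻¹ := rfl
@[simp] lemma inv_y (a : PP ε) : (a⁻¹).y = a.y⁻¹ := rfl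

lemma symm_inv (y : G₂) : ε.f y⁻¹ y = ε.f y y⁻¹ := by
  have h := ε.cocycle y⁻¹ y y
  simpa [ε.norm_left, ε.norm_right] using h.symm

instance : Group (PP ε) where
  mul_assoc a b c := by
    have h : ε.f a.y b.y * ε.f (a.y * b.y) c.y
        = ε.f b.y c.y * ε.f a.y (b.y * c.y) := ε.cocycle b.y a.y c.y
    ext
    · show a.x * b.x * ε.f a.y b.y * c.x * ε.f (a.y * b.y) c.y
        = a.x * (b.x * c.x * ε.f b.y c.y) * ε.f a.y (b.y * c.y)
      calc a.x * b.x * ε.f a.y b.y * c.x * ε.f (a.y * b.y) c.y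
          = a.x * b.x * c.x * (ε.f a.y b.y * ε.f (a.y * b.y) c.y) := by
            simp [mul_assoc, mul_comm, mul_left_comm]
        _ = a.x * b.x * c.x * (ε.f b.y c.y * ε.f a.y (b.y * c.y)) := by rw [h]
        _ = a.x * (b.x * c.x * ε.f b.y c.y) * ε.f a.y (b.y * c.y) := by
            simp [mul_assoc, mul_comm, mul_left_comm]
    · exact mul_assoc a.y b.y c.y
  one_mul a := by ext <;> simp [ε.norm_left]
  mul_one a := by ext <;> simp [ε.norm_right]
  inv_mul_cancel a := by
    ext
    · show a.x⁻¹ * (ε.f a.y a.y⁻¹)⁻¹ * a.x * ε.f a.y⁻¹ a.y = (1 : G₁)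
      rw [symm_inv]
      simp [mul_assoc, mul_comm, mul_left_comm]
    · exact inv_mul_cancel a.y

end PP

namespace PP

variable {ε ε₁ ε₂ : Cocycle G₁ G₂}

lemma mk_eq_mk_one_mul_one_mk (x : G₁) (y : G₂) :
    (⟨x, y⟩ : PP ε) = ⟨x, 1⟩ * ⟨1, y⟩ := by
  ext <;> simp [ε.norm_left]

lemma mk_one_mul_mk_one (x x' : G₁) : (⟨x, 1⟩ : PP ε) * ⟨x', 1⟩ = ⟨x * x', 1⟩ := by
  ext <;> simp [ε.norm_left]

lemma one_mk_mul_one_mk (y y' : G₂) :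
    (⟨1, y⟩ : PP ε) * ⟨1, y'⟩ = ⟨ε.f y y', y * y'⟩ := by
  ext <;> simp

lemma commute_mk_one (x : G₁) (a : PP ε) : Commute (⟨x, 1⟩ : PP ε) a := by
  ext <;> simp [ε.norm_left, ε.norm_right, mul_comm]

section Hom

variable {F : Type*} [FunLike F (PP ε₁) (PP ε₂)] [MonoidHomClass F (PP ε₁) (PP ε₂)]

lemma y_map_eq_of_center_eq_bot (hZ : Subgroup.center G₂ = ⊥) (φ : F)
    (hφ : ∀ y : G₂, (φ ⟨1, y⟩).y = y) (a : PP ε₁) : (φ a).y = a.y := by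
  have hcentral (x : G₁) : (φ ⟨x, 1⟩).y ∈ Subgroup.center G₂ := by
    refine Subgroup.mem_center_iff.mpr fun y => ?_
    simpa [hφ] using congrArg (fun b => (φ b).y) (commute_mk_one x ⟨1, y⟩).eq.symm
  have hone (x : G₁) : (φ ⟨x, 1⟩).y = 1 := by
    simpa [hZ] using hcentral x
  obtain ⟨x, y⟩ := a
  rw [mk_eq_mk_one_mul_one_mk x y, map_mul, mul_y, mul_y, hone, hφ, one_mul]

def fstHom (φ : F) (hφ : ∀ a : PP ε₁, (φ a).y = a.y) : G₁ →* G₁ where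
  toFun x := (φ ⟨x, 1⟩).x
  map_one' := congrArg PP.x (map_one φ)
  map_mul' x x' := by
    rw [← mk_one_mul_mk_one, map_mul, mul_x, hφ, hφ, ε₂.norm_left, mul_one]

lemma fstHom_mul_inv_eq_coboundary (φ : F) (hφ : ∀ a : PP ε₁, (φ a).y = a.y) (y y' : G₂) :
    fstHom φ hφ (ε₁.f y y') * (ε₂.f y y')⁻¹
      = (φ ⟨1, y⟩).x * (φ ⟨1, y'⟩).x * ((φ ⟨1, y * y'⟩).x)⁻¹ := by
  have h := congrArg (fun b => (φ b).x) (one_mk_mul_one_mk (ε := ε₁) y y')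
  rw [mk_eq_mk_one_mul_one_mk (ε₁.f y y')] at h
  simp only [map_mul, mul_x, hφ, ε₂.norm_left, mul_one] at h
  rw [fstHom, MonoidHom.coe_mk, OneHom.coe_mk, eq_mul_inv_of_mul_eq h.symm,
    mul_right_comm _ _ (ε₂.f y y')⁻¹, mul_inv_cancel_right]

end Hom

noncomputable def fstMulEquiv (φ : PP ε₁ ≃* PP ε₂) (hφ : ∀ a : PP ε₁, (φ a).y = a.y) :
    G₁ ≃* G₁ :=
  MulEquiv.ofBijective (fstHom φ hφ) ⟨fun x x' h => by
      simpa using φ.injective (PP.ext h ((hφ ⟨x, 1⟩).trans (hφ ⟨x', 1⟩).symm)),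
    fun x => by
      set a := φ.symm ⟨x, 1⟩
      have ha : a.y = 1 := by simpa [a] using (hφ a).symm
      exact ⟨a.x, by simp [fstHom, show (⟨a.x, 1⟩ : PP ε₁) = a from PP.ext rfl ha.symm, a]⟩⟩

def mulEquivOfCoboundary (σ : G₁ ≃* G₁) (η : G₂ → G₁)
    (h : ∀ y y' : G₂, σ (ε₁.f y y') * (ε₂.f y y')⁻¹ = η y * η y' * (η (y * y'))⁻¹) :
    PP ε₁ ≃* PP ε₂ where
  toFun a := ⟨σ a.x * η a.y, a.y⟩
  invFun a := ⟨σ.symm (a.x * (η a.y)⁻¹), a.y⟩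
  left_inv a := by ext <;> simp
  right_inv a := by ext <;> simp
  map_mul' a b := by
    have hσ := mul_inv_eq_iff_eq_mul.mp (h a.y b.y)
    ext
    · simp only [mul_x, mul_y, map_mul, hσ]
      simp [mul_comm, mul_left_comm, mul_assoc]
    · rfl

end PP

theorem stmt9 (hZ : Subgroup.center G₂ = ⊥) (ε₁ ε₂ : Cocycle G₁ G₂) :
    (∃ φ : PP ε₁ ≃* PP ε₂, ∀ y : G₂, (φ ⟨1, y⟩).y = y) ↔
      ∃ σ : G₁ ≃* G₁, ∃ η : G₂ → G₁, ∀ y y' : G₂,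
        σ (ε₁.f y y') * (ε₂.f y y')⁻¹ = η y * η y' * (η (y * y'))⁻¹ := by
  constructor
  · rintro ⟨φ, hφ⟩
    have hy := PP.y_map_eq_of_center_eq_bot hZ φ hφ
    exact ⟨PP.fstMulEquiv φ hy, fun y => (φ ⟨1, y⟩).x, PP.fstHom_mul_inv_eq_coboundary φ hy⟩
  · rintro ⟨σ, η, h⟩
    exact ⟨PP.mulEquivOfCoboundary σ η h, fun _ => rfl⟩
end

section
/- Suppose φ = (φ₁₁, φ₁₂; φ₂₁, id) is a G₂-isomorphism from G₁ ×_{ε₁} G₂ to G₁ ×_{ε₂} G₂ such that φ₁₁ restricts to the identity on H = Im(ε₁) (the subgroup generated by the values of ε₁). Then the image of ε₁ lies in the kernel of φ₂₁, and ε₁·ε₂⁻¹ is a 2-coboundary: ε₁(y,y')·ε₂(y,y')⁻¹ = φ₁₂(y)·φ₁₂(y')·φ₁₂(yy')⁻¹ for all y,y' ∈ G₂. -/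
variable {G₁ G₂ : Type*} [CommGroup G₁] [Group G₂]

namespace PP

variable {ε ε₁ ε₂ : Cocycle G₁ G₂}

lemma mk_one_mul_mk_one_s11 (y y' : G₂) :
    (⟨1, y⟩ : PP ε) * ⟨1, y'⟩ = ⟨ε.f y y', 1⟩ * ⟨1, y * y'⟩ := by
  ext <;> simp [ε.norm_left]

variable {F : Type*} [FunLike F (PP ε₁) (PP ε₂)] [MonoidHomClass F (PP ε₁) (PP ε₂)]

lemma map_mk_one_mul_mk_one (φ : F) (y y' : G₂) :
    φ ⟨1, y⟩ * φ ⟨1, y'⟩ = φ ⟨ε₁.f y y', 1⟩ * φ ⟨1, y * y'⟩ := by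
  rw [← map_mul, ← map_mul, mk_one_mul_mk_one_s11]

lemma map_cocycle_y (φ : F) (h22 : ∀ y : G₂, (φ ⟨1, y⟩).y = y) (y y' : G₂) :
    (φ ⟨ε₁.f y y', 1⟩).y = 1 := by
  have h := congrArg PP.y (map_mk_one_mul_mk_one φ y y')
  simp only [mul_y, h22] at h
  exact mul_eq_right.mp h.symm

lemma cocycle_div_eq_coboundary (φ : F) (h22 : ∀ y : G₂, (φ ⟨1, y⟩).y = y) {y y' : G₂}
    (h11 : (φ ⟨ε₁.f y y', 1⟩).x = ε₁.f y y') :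
    ε₁.f y y' * (ε₂.f y y')⁻¹ =
      (φ ⟨1, y⟩).x * (φ ⟨1, y'⟩).x * ((φ ⟨1, y * y'⟩).x)⁻¹ := by
  have h := congrArg PP.x (map_mk_one_mul_mk_one φ y y')
  simp only [mul_x, h22, map_cocycle_y φ h22, h11, ε₂.norm_left, mul_one] at h
  rw [← div_eq_mul_inv, ← div_eq_mul_inv, div_eq_div_iff_mul_eq_mul, h]

end PP

theorem stmt11 (ε₁ ε₂ : Cocycle G₁ G₂) (φ : PP ε₁ ≃* PP ε₂)
    (h22 : ∀ y : G₂, (φ ⟨1, y⟩).y = y)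
    (h11 : ∀ x ∈ Subgroup.closure {x : G₁ | ∃ y y' : G₂, ε₁.f y y' = x},
      (φ ⟨x, 1⟩).x = x) :
    (∀ y y' : G₂, (φ ⟨ε₁.f y y', 1⟩).y = 1) ∧
      ∀ y y' : G₂, ε₁.f y y' * (ε₂.f y y')⁻¹ =
        (φ ⟨1, y⟩).x * (φ ⟨1, y'⟩).x * ((φ ⟨1, y * y'⟩).x)⁻¹ :=
  ⟨PP.map_cocycle_y φ h22, fun y y' =>
    PP.cocycle_div_eq_coboundary φ h22 (h11 _ (Subgroup.subset_closure ⟨y, y', rfl⟩))⟩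
end
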